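/- arXiv:2005.00118 — 4 statements merged into one kernel-verified Lean document; each statement's English description precedes it below -/
import Mathlib

section
/- Let φ be a convex Φ-function satisfying (aInc)_p and (aDec)_q with 1 < p ≤ q. Then there exist constants 0 < c ≤ C depending only on p, q (and the almost-monotonicity constant L) such that for all s > 0: c·φ(s) ≤ φ̃(φ(s)/s) ≤ C·φ(s), where φ̃ is the Young conjugate of φ. -/
/-- The (real-valued) Young conjugate `φ̃(t) = sup { r·t − φ(r) : r ≥ 0 }`. -/
noncomputable def conjFn (φ : ℝ → ℝ) (t : ℝ) : ℝ :=
  sSup {y : ℝ | ∃ r : ℝ, 0 ≤ r ∧ y = r * t - φ r}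

/-!
For `t = φ(s)/s` the supremum defining `φ̃(t)` is attained, up to constants, at `r ≈ s`.
By (aInc)_p with `p > 1`, scaling the argument by `λ ≥ C := (2L)^{1/(p-1)}` multiplies `φ` by at
least `2λ`. Hence for `r ≥ C s` one has `φ(r) ≥ 2 r t`, so such `r` contribute nothing, while for
`r ≤ C s` the term `r t - φ(r)` is at most `C s t = C φ(s)`. Conversely `r = s / C` gives
`φ(s/C) ≤ φ(s) / (2C)`, hence `φ̃(t) ≥ φ(s)/C - φ(s)/(2C) = φ(s)/(2C)`.
-/

/-- Condition (aInc)_p with constant `L`: `s ↦ φ(s)/s^p` is almost increasing on `(0, ∞)`. -/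
def AInc (φ : ℝ → ℝ) (p L : ℝ) : Prop :=
  ∀ s t : ℝ, 0 < s → s ≤ t → φ s / s ^ p ≤ L * (φ t / t ^ p)

section Conjugate

variable {φ : ℝ → ℝ} {t M : ℝ}

theorem conjFn_le_of_forall (h : ∀ r, 0 ≤ r → r * t - φ r ≤ M) : conjFn φ t ≤ M :=
  csSup_le ⟨_, 0, le_rfl, rfl⟩ (by rintro y ⟨r, hr, rfl⟩; exact h r hr)

theorem le_conjFn_of_forall (h : ∀ r, 0 ≤ r → r * t - φ r ≤ M) {r : ℝ} (hr : 0 ≤ r) :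
    r * t - φ r ≤ conjFn φ t :=
  le_csSup ⟨M, by rintro y ⟨r, hr, rfl⟩; exact h r hr⟩ ⟨r, hr, rfl⟩

end Conjugate

namespace AInc

variable {φ : ℝ → ℝ} {p L s l : ℝ}

theorem rpow_mul_le (h : AInc φ p L) (hs : 0 < s) (hl : 1 ≤ l) :
    l ^ p * φ s ≤ L * φ (l * s) := by
  have hl0 : 0 < l := by linarith
  have hsp : 0 < s ^ p := Real.rpow_pos_of_pos hs p
  have key := h s (l * s) hs (le_mul_of_one_le_left hs.le hl)
  rw [Real.mul_rpow hl0.le hs.le, div_le_iff₀ hsp] at key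
  calc l ^ p * φ s ≤ l ^ p * (L * (φ (l * s) / (l ^ p * s ^ p)) * s ^ p) := by gcongr
    _ = L * φ (l * s) := by field_simp

theorem two_mul_mul_le (h : AInc φ p L) (hL : 0 < L) (hs : 0 < s) (hφs : 0 ≤ φ s)
    (hl : 1 ≤ l) (hlp : 2 * L ≤ l ^ (p - 1)) : 2 * l * φ s ≤ φ (l * s) := by
  have hl0 : 0 < l := by linarith
  have hpow : l ^ p = l ^ (p - 1) * l := by
    rw [← Real.rpow_add_one hl0.ne']; ring_nf
  have key : L * (2 * l * φ s) ≤ L * φ (l * s) :=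
    calc L * (2 * l * φ s) = 2 * L * l * φ s := by ring
      _ ≤ l ^ (p - 1) * l * φ s := by gcongr
      _ = l ^ p * φ s := by rw [hpow]
      _ ≤ L * φ (l * s) := h.rpow_mul_le hs hl
  exact le_of_mul_le_mul_left key hL

variable {C : ℝ}
variable (h : AInc φ p L) (hL : 0 < L) (hφ : ∀ s, 0 ≤ s → 0 ≤ φ s)
  (hC : 1 ≤ C) (hCp : 2 * L ≤ C ^ (p - 1))
include h hL hφ hC hCp

theorem sub_le_mul (hp : 1 ≤ p) (hs : 0 < s) {r : ℝ} (hr : 0 ≤ r) :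
    r * (φ s / s) - φ r ≤ C * φ s := by
  have hφs := hφ s hs.le
  rcases le_or_gt r (C * s) with hrC | hrC
  · have : r * (φ s / s) ≤ C * φ s :=
      calc r * (φ s / s) ≤ C * s * (φ s / s) := by gcongr
        _ = C * φ s := by rw [mul_assoc, mul_div_cancel₀ _ hs.ne']
    linarith [hφ r hr]
  · have hCl : C ≤ r / s := (le_div_iff₀ hs).2 hrC.le
    have hlp : 2 * L ≤ (r / s) ^ (p - 1) :=
      hCp.trans (Real.rpow_le_rpow (by linarith) hCl (by linarith))
    have key := h.two_mul_mul_le hL hs hφs (hC.trans hCl) hlp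
    rw [div_mul_cancel₀ _ hs.ne'] at key
    have : 2 * (r / s) * φ s = 2 * (r * (φ s / s)) := by ring
    linarith [mul_nonneg hr (div_nonneg hφs hs.le), mul_nonneg (by linarith : 0 ≤ C) hφs]

theorem conjFn_div_le (hp : 1 ≤ p) (hs : 0 < s) : conjFn φ (φ s / s) ≤ C * φ s :=
  conjFn_le_of_forall fun _ hr ↦ h.sub_le_mul hL hφ hC hCp hp hs hr

theorem le_conjFn_div (hp : 1 ≤ p) (hs : 0 < s) : C⁻¹ / 2 * φ s ≤ conjFn φ (φ s / s) := by
  have hC0 : 0 < C := by linarith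
  have hus : 0 < C⁻¹ * s := by positivity
  have hsmall : 2 * C * φ (C⁻¹ * s) ≤ φ s := by
    simpa [hC0.ne'] using h.two_mul_mul_le hL hus (hφ _ hus.le) hC hCp
  have hmem := le_conjFn_of_forall (fun _ hr ↦ h.sub_le_mul hL hφ hC hCp hp hs hr) hus.le
  have : C⁻¹ * s * (φ s / s) = C⁻¹ * φ s := by field_simp
  rw [this] at hmem
  have : φ (C⁻¹ * s) ≤ C⁻¹ / 2 * φ s :=
    calc φ (C⁻¹ * s) = C⁻¹ / 2 * (2 * C * φ (C⁻¹ * s)) := by field_simp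
      _ ≤ C⁻¹ / 2 * φ s := by gcongr
  linarith

end AInc

theorem stmt5_general (φ : ℝ → ℝ) (p L : ℝ) (hp : 1 < p) (hL : 1 ≤ L)
    (hφnn : ∀ s : ℝ, 0 ≤ s → 0 ≤ φ s)
    (haInc : ∀ s t : ℝ, 0 < s → s ≤ t → φ s / s ^ p ≤ L * (φ t / t ^ p)) :
    ∃ c C : ℝ, 0 < c ∧ c ≤ C ∧ ∀ s : ℝ, 0 < s →
      c * φ s ≤ conjFn φ (φ s / s) ∧ conjFn φ (φ s / s) ≤ C * φ s := by
  have hL0 : 0 < L := by linarith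
  set C := (2 * L) ^ (p - 1)⁻¹
  have hC : 1 ≤ C := Real.one_le_rpow (by linarith) (inv_nonneg.2 (by linarith))
  have hCp : 2 * L ≤ C ^ (p - 1) := by
    rw [← Real.rpow_mul (by linarith), inv_mul_cancel₀ (by linarith), Real.rpow_one]
  refine ⟨C⁻¹ / 2, C, by positivity, ?_, fun s hs ↦ ⟨?_, ?_⟩⟩
  · linarith [inv_le_one_of_one_le₀ hC]
  · exact AInc.le_conjFn_div haInc hL0 hφnn hC hCp hp.le hs
  · exact AInc.conjFn_div_le haInc hL0 hφnn hC hCp hp.le hs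

/-- Let `φ` be a convex Φ-function satisfying (aInc)_p and (aDec)_q with
`1 < p ≤ q`. Then there exist constants `0 < c ≤ C` (depending only on `p, q, L`)
such that for all `s > 0`: `c·φ(s) ≤ φ̃(φ(s)/s) ≤ C·φ(s)`. -/
theorem stmt5 (φ : ℝ → ℝ) (p q L : ℝ) (hp : 1 < p) (hpq : p ≤ q) (hL : 1 ≤ L)
    (hφ0 : φ 0 = 0) (hφnn : ∀ s : ℝ, 0 ≤ s → 0 ≤ φ s)
    (hconv : ConvexOn ℝ (Set.Ici (0 : ℝ)) φ)
    (hmono : ∀ s t : ℝ, 0 ≤ s → s ≤ t → φ s ≤ φ t)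
    (haInc : ∀ s t : ℝ, 0 < s → s ≤ t → φ s / s ^ p ≤ L * (φ t / t ^ p))
    (haDec : ∀ s t : ℝ, 0 < t → t ≤ s → L * (φ s / s ^ q) ≤ φ t / t ^ q) :
    ∃ c C : ℝ, 0 < c ∧ c ≤ C ∧ ∀ s : ℝ, 0 < s →
      c * φ s ≤ conjFn φ (φ s / s) ∧ conjFn φ (φ s / s) ≤ C * φ s :=
  stmt5_general φ p L hp hL hφnn haInc
end

section
/- Suppose for every nonempty open connected set Ω ⊂ ℝⁿ that A-superharmonic functions satisfy: the pointwise minimum of two A-superharmonic functions is A-superharmonic. Prove the abstract pasting lemma: if D ⊂ Ω are open, u is A-superharmonic in Ω, v is A-superharmonic in D, and the gluing w = min(u,v) on D, w = u on Ω∖D is lower semicontinuous, then w satisfies the comparison property defining A-superharmonicity in Ω, i.e. for every open E ⋐ Ω and every A-harmonic h ∈ C(Ē) with h ≤ w on ∂E, one has h ≤ w in E. [Assume the Comparison Principle: an A-subharmonic function below an A-superharmonic one on the boundary of a compactly contained open set remains below inside.] -/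
open Filter Classical

/-- The comparison property defining `A`-superharmonicity: for every open `E ⋐ Ω` and
every `A`-harmonic `h` continuous on `Ē` with `h ≤ w` on `∂E`, one has `h ≤ w` in `E`.
Here `Harm E h` abstractly expresses that `h` is `A`-harmonic in `E`. -/
def CompareOn {n : ℕ}
    (Harm : Set (EuclideanSpace ℝ (Fin n)) → (EuclideanSpace ℝ (Fin n) → ℝ) → Prop)
    (Ω : Set (EuclideanSpace ℝ (Fin n))) (w : EuclideanSpace ℝ (Fin n) → EReal) : Prop :=
  ∀ E : Set (EuclideanSpace ℝ (Fin n)), IsOpen E → IsCompact (closure E) → closure E ⊆ Ω →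
    ∀ h : EuclideanSpace ℝ (Fin n) → ℝ, Harm E h → ContinuousOn h (closure E) →
      (∀ x ∈ frontier E, (h x : EReal) ≤ w x) → ∀ x ∈ E, (h x : EReal) ≤ w x

/-- `w` is `A`-superharmonic in `Ω`: lower semicontinuous, not identically `∞` on any
component of `Ω`, and satisfying the comparison property with `A`-harmonic functions. -/
def IsSuperharmonic {n : ℕ}
    (Harm : Set (EuclideanSpace ℝ (Fin n)) → (EuclideanSpace ℝ (Fin n) → ℝ) → Prop)
    (Ω : Set (EuclideanSpace ℝ (Fin n))) (w : EuclideanSpace ℝ (Fin n) → EReal) : Prop :=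
  LowerSemicontinuousOn w Ω ∧
  (∀ x ∈ Ω, ∃ y ∈ connectedComponentIn Ω x, w y ≠ ⊤) ∧
  CompareOn Harm Ω w

/-- Auxiliary restriction lemma: a superharmonic function restricts to a superharmonic
function on any connected subset where it is not identically `⊤`. -/
lemma isSuperharmonic_restrict {n : ℕ}
    {Harm : Set (EuclideanSpace ℝ (Fin n)) → (EuclideanSpace ℝ (Fin n) → ℝ) → Prop}
    {S C : Set (EuclideanSpace ℝ (Fin n))} {f : EuclideanSpace ℝ (Fin n) → EReal}
    (hf : IsSuperharmonic Harm S f) (hCS : C ⊆ S) (hC : IsConnected C)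
    (hne : ∃ y ∈ C, f y ≠ ⊤) : IsSuperharmonic Harm C f := by
  refine ⟨hf.1.mono hCS, ?_, ?_⟩
  · intro z hz
    rwa [hC.isPreconnected.connectedComponentIn hz]
  · intro E hE hcE hEC
    exact hf.2.2 E hE hcE (hEC.trans hCS)

/-- pasting lemma: suppose the minimum of two `A`-superharmonic functions
is `A`-superharmonic on every nonempty open connected set, and assume the Comparison
Principle (an `A`-harmonic function lying below an `A`-superharmonic one on the boundary
of a compactly contained open set, in the liminf sense, remains below inside). If
`D ⊆ Ω` are open, `u` is `A`-superharmonic in `Ω`, `v` is `A`-superharmonic in `D`, and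
the gluing `w = min(u,v)` on `D`, `w = u` on `Ω∖D` is lower semicontinuous, then `w`
satisfies the comparison property defining `A`-superharmonicity in `Ω`. -/
theorem stmt8 {n : ℕ}
    (Harm : Set (EuclideanSpace ℝ (Fin n)) → (EuclideanSpace ℝ (Fin n) → ℝ) → Prop)
    (Ω D : Set (EuclideanSpace ℝ (Fin n))) (hΩ : IsOpen Ω) (hD : IsOpen D) (hDΩ : D ⊆ Ω)
    (u v : EuclideanSpace ℝ (Fin n) → EReal)
    (hu : IsSuperharmonic Harm Ω u) (hv : IsSuperharmonic Harm D v)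
    (hmin : ∀ Ω' : Set (EuclideanSpace ℝ (Fin n)), IsOpen Ω' → IsConnected Ω' →
      ∀ w₁ w₂ : EuclideanSpace ℝ (Fin n) → EReal,
        IsSuperharmonic Harm Ω' w₁ → IsSuperharmonic Harm Ω' w₂ →
          IsSuperharmonic Harm Ω' (fun x => min (w₁ x) (w₂ x)))
    (hCP : ∀ (G E : Set (EuclideanSpace ℝ (Fin n))), IsOpen G → IsCompact (closure G) →
      G ⊆ E → ∀ (h : EuclideanSpace ℝ (Fin n) → ℝ) (w' : EuclideanSpace ℝ (Fin n) → EReal),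
        Harm E h → ContinuousOn h (closure G) → IsSuperharmonic Harm G w' →
        (∀ x ∈ frontier G, (h x : EReal) ≤ liminf w' (nhdsWithin x G)) →
        ∀ x ∈ G, (h x : EReal) ≤ w' x)
    (hw : LowerSemicontinuousOn
      (fun x => if x ∈ D then min (u x) (v x) else u x) Ω) :
    CompareOn Harm Ω (fun x => if x ∈ D then min (u x) (v x) else u x) := by
  classical
  set w : EuclideanSpace ℝ (Fin n) → EReal :=
    fun x => if x ∈ D then min (u x) (v x) else u x with hwdef
  intro E hE hcE hEΩ h hHarm hcont hbd x hxE
  -- the glued function lies below `u` everywhere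
  have hwu : ∀ y, w y ≤ u y := by
    intro y
    by_cases hy : y ∈ D <;> simp [hwdef, hy, min_le_left]
  -- Step 1: `h ≤ u` in `E` by the comparison property of `u` in `Ω`.
  have hhu : ∀ y ∈ E, (h y : EReal) ≤ u y :=
    hu.2.2 E hE hcE hEΩ h hHarm hcont (fun y hy => (hbd y hy).trans (hwu y)) 
  by_cases hxD : x ∈ D
  swap
  · show (h x : EReal) ≤ w x
    rw [hwdef]
    simpa [hxD] using hhu x hxE
  -- Now `x ∈ E ∩ D`.  Work in the connected component `C` of `E ∩ D` containing `x`.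
  set G := E ∩ D with hGdef
  have hGopen : IsOpen G := hE.inter hD
  have hxG : x ∈ G := ⟨hxE, hxD⟩
  set C := connectedComponentIn G x with hCdef
  have hxC : x ∈ C := mem_connectedComponentIn hxG
  have hCG : C ⊆ G := connectedComponentIn_subset G x
  have hCopen : IsOpen C := hGopen.connectedComponentIn
  have hCconn : IsConnected C := isConnected_connectedComponentIn_iff.mpr hxG
  have hCE : C ⊆ E := fun y hy => (hCG hy).1
  have hCD : C ⊆ D := fun y hy => (hCG hy).2
  have hCΩ : C ⊆ Ω := fun y hy => hDΩ (hCD hy)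
  have hclCE : closure C ⊆ closure E := closure_mono hCE
  have hcC : IsCompact (closure C) := hcE.of_isClosed_subset isClosed_closure hclCE
  -- the frontier of the component `C` is contained in the frontier of `G`
  have hfr : frontier C ⊆ frontier G := by
    intro y hy
    rw [hCopen.frontier_eq] at hy
    rw [hGopen.frontier_eq]
    have hyclG : y ∈ closure G := closure_mono hCG hy.1
    refine ⟨hyclG, fun hyG => ?_⟩
    have hopen : IsOpen (connectedComponentIn G y) := hGopen.connectedComponentIn
    have hymem : y ∈ connectedComponentIn G y := mem_connectedComponentIn hyG
    obtain ⟨z, hz1, hz2⟩ := _root_.mem_closure_iff.mp hy.1 _ hopen hymem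
    have e1 : connectedComponentIn G y = connectedComponentIn G z :=
      connectedComponentIn_eq hz1
    have e2 : C = connectedComponentIn G z := connectedComponentIn_eq hz2
    have hyC : y ∈ C := by rw [e2, ← e1]; exact hymem
    exact hy.2 hyC
  -- `h ≤ w` on the frontier of `G`
  have hbdG : ∀ y ∈ frontier G, (h y : EReal) ≤ w y := by
    intro y hy
    have := frontier_inter_subset E D hy
    rcases this with hy1 | hy2
    · exact hbd y hy1.1
    · have hyD : y ∉ D := by
        rw [hD.frontier_eq] at hy2
        exact hy2.2.2
      by_cases hyE : y ∈ E
      · have := hhu y hyE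
        show (h y : EReal) ≤ w y
        rw [hwdef]; simpa [hyD] using this
      · have : y ∈ frontier E := by
          rw [hE.frontier_eq]; exact ⟨hy2.1, hyE⟩
        exact hbd y this
  -- lower semicontinuity gives `w y ≤ liminf w` along `C`
  have hlsc : ∀ y ∈ Ω, w y ≤ liminf w (nhdsWithin y C) := by
    intro y hyΩ
    refine le_of_forall_lt_imp_le_of_dense ?_
    intro c hc
    have h1 : ∀ᶠ z in nhdsWithin y Ω, c < w z := hw y hyΩ c hc
    have h2 : ∀ᶠ z in nhdsWithin y C, c < w z :=
      h1.filter_mono (nhdsWithin_mono y hCΩ)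
    exact le_liminf_of_le (by isBoundedDefault) (h2.mono fun z hz => hz.le)
  -- the main comparison step on `C` against any superharmonic `w' ≥ w` on `C`
  have main : ∀ w' : EuclideanSpace ℝ (Fin n) → EReal, IsSuperharmonic Harm C w' →
      (∀ y ∈ C, w y ≤ w' y) → (h x : EReal) ≤ w' x := by
    intro w' hsup hle
    refine hCP C E hCopen hcC hCE h w' hHarm (hcont.mono hclCE) hsup ?_ x hxC
    intro y hy
    have hyG : y ∈ frontier G := hfr hy
    have hyΩ : y ∈ Ω := hEΩ (closure_mono Set.inter_subset_left hyG.1)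
    have step1 : (h y : EReal) ≤ w y := hbdG y hyG
    have step2 : w y ≤ liminf w (nhdsWithin y C) := hlsc y hyΩ
    have step3 : liminf w (nhdsWithin y C) ≤ liminf w' (nhdsWithin y C) := by
      refine liminf_le_liminf ?_
      filter_upwards [self_mem_nhdsWithin] with z hz
      exact hle z hz
    exact step1.trans (step2.trans step3)
  -- conclusion: `h x ≤ min (u x) (v x)`
  have hxu : (h x : EReal) ≤ u x := hhu x hxE
  have hxv : (h x : EReal) ≤ v x := by
    by_cases hvfin : ∃ y ∈ C, v y ≠ ⊤
    · refine main v (isSuperharmonic_restrict hv hCD hCconn hvfin) ?_ 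
      intro y hy
      have : w y = min (u y) (v y) := by rw [hwdef]; simp [hCD hy]
      rw [this]; exact min_le_right _ _
    · push_neg at hvfin
      rw [hvfin x hxC]
      exact le_top
  show (h x : EReal) ≤ w x
  rw [hwdef]
  simp only [hxD, if_pos]
  exact le_min hxu hxv
end

section
/- Let Ω ⊂ ℝⁿ be open and let u ≢ ∞ on any component of Ω. Then u is A-superharmonic in Ω if and only if min{u, k} is A-superharmonic in Ω for every k = 1, 2, …. -/
open Filter

/-- Let `Ω ⊂ ℝⁿ` be open and `u ≢ ∞` on any component of `Ω`. Given the
comparison compatibility with constants (maximum principle for `A`-harmonic functions),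
`u` is `A`-superharmonic in `Ω` if and only if `min{u, k}` is `A`-superharmonic in `Ω`
for every `k = 1, 2, …`. -/
theorem stmt10 {n : ℕ}
    (Harm : Set (EuclideanSpace ℝ (Fin n)) → (EuclideanSpace ℝ (Fin n) → ℝ) → Prop)
    (Ω : Set (EuclideanSpace ℝ (Fin n))) (hΩ : IsOpen Ω)
    (hMax : ∀ (E : Set (EuclideanSpace ℝ (Fin n))) (h : EuclideanSpace ℝ (Fin n) → ℝ),
      IsOpen E → IsCompact (closure E) → closure E ⊆ Ω → Harm E h →
      ContinuousOn h (closure E) → ∀ M : ℝ, (∀ x ∈ frontier E, h x ≤ M) →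
        ∀ x ∈ E, h x ≤ M)
    (u : EuclideanSpace ℝ (Fin n) → EReal)
    (hfin : ∀ x ∈ Ω, ∃ y ∈ connectedComponentIn Ω x, u y ≠ ⊤) :
    IsSuperharmonic Harm Ω u ↔
      ∀ k : ℕ, 0 < k → IsSuperharmonic Harm Ω (fun x => min (u x) ((k : ℝ) : EReal)) := by
  constructor
  · rintro ⟨hlsc, -, hcmp⟩ k hk
    refine ⟨?_, ?_, ?_⟩
    · intro x hx c hc
      have hc1 : c < u x := (lt_min_iff.mp hc).1
      have hc2 : c < ((k : ℝ) : EReal) := (lt_min_iff.mp hc).2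
      filter_upwards [hlsc x hx c hc1] with y hy
      exact lt_min hy hc2
    · intro x hx
      obtain ⟨y, hy, -⟩ := hfin x hx
      exact ⟨y, hy, ne_top_of_le_ne_top (EReal.coe_ne_top _) (min_le_right _ _)⟩
    · intro E hE hEc hEΩ h hharm hcont hb x hx
      have h1 : ∀ y ∈ frontier E, (h y : EReal) ≤ u y :=
        fun y hy => (hb y hy).trans (min_le_left _ _)
      have h2 : ∀ y ∈ frontier E, h y ≤ (k : ℝ) := by
        intro y hy
        have := (hb y hy).trans (min_le_right _ _)
        exact_mod_cast this
      refine le_min (hcmp E hE hEc hEΩ h hharm hcont h1 x hx) ?_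
      exact_mod_cast hMax E h hE hEc hEΩ hharm hcont (k : ℝ) h2 x hx
  · intro H
    refine ⟨?_, hfin, ?_⟩
    · intro x hx c hc
      obtain ⟨k, hk0, hck⟩ : ∃ k : ℕ, 0 < k ∧ c < ((k : ℝ) : EReal) := by
        induction c using EReal.rec with
        | bot => exact ⟨1, one_pos, by exact_mod_cast EReal.bot_lt_coe _⟩
        | coe r =>
          refine ⟨⌈r⌉₊ + 1, Nat.succ_pos _, ?_⟩
          have : r < ((⌈r⌉₊ + 1 : ℕ) : ℝ) := by
            push_cast
            linarith [Nat.le_ceil r]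
          exact_mod_cast this
        | top => exact absurd hc (not_lt.mpr le_top)
      filter_upwards [(H k hk0).1 x hx c (lt_min hc hck)] with y hy
      exact lt_of_lt_of_le hy (min_le_left _ _)
    · intro E hE hEc hEΩ h hharm hcont hb x hx
      obtain ⟨M, hM⟩ : ∃ M : ℝ, ∀ y ∈ closure E, h y ≤ M := by
        rcases E.eq_empty_or_nonempty with rfl | hne
        · exact ⟨0, by simp⟩
        · obtain ⟨y, hy, hmax⟩ := hEc.exists_isMaxOn hne.closure hcont
          exact ⟨h y, fun z hz => hmax hz⟩
      obtain ⟨k, hk0, hMk⟩ : ∃ k : ℕ, 0 < k ∧ M ≤ (k : ℝ) :=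
        ⟨⌈M⌉₊ + 1, Nat.succ_pos _, by push_cast; linarith [Nat.le_ceil M]⟩
      have hb' : ∀ y ∈ frontier E, (h y : EReal) ≤ min (u y) ((k : ℝ) : EReal) := by
        intro y hy
        refine le_min (hb y hy) ?_
        exact_mod_cast (hM y (frontier_subset_closure hy)).trans hMk
      exact ((H k hk0).2.2 E hE hEc hEΩ h hharm hcont hb' x hx).trans (min_le_left _ _)
end

section
/- Let u be A-superharmonic and finite a.e. in Ω, and suppose the weak Harnack-type conclusion of Lemma 4.17 holds near each point. If u is lower semicontinuous and for every ball B ⊂ Ω and every point x one has u(x) ≤ liminf_{y→x} u(y) ≤ ess liminf_{y→x} u(y), and additionally any A-superharmonic function vanishing a.e. on Ω vanishes identically (Lemma 4.13), then u(x) = liminf_{y→x} u(y) = ess liminf_{y→x} u(y) for every x ∈ Ω. -/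
open Filter MeasureTheory Metric

/-!
By hypothesis `u x ≤ liminf ≤ ess liminf`, so it suffices to show `ess inf_{B(x,r) ∩ Ω} u ≤ u x`
for every `r > 0`. If instead `u x < c < ess inf_{B(x,r) ∩ Ω} u` for a real `c`, then `u > c`
a.e. on a small ball around `x` inside `Ω`, and the minimum principle (Lemma 4.13, in the form
of `hzero`) upgrades this to `u ≥ c` everywhere on that ball, in particular at `x`.
-/

theorem essInf_restrict_ball_inter_le {α : Type*} [PseudoMetricSpace α] [MeasurableSpace α]
    {μ : Measure α} {Ω : Set α} (hΩ : IsOpen Ω) {u : α → EReal} {x : α} (hx : x ∈ Ω)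
    (hmin : ∀ (c : ℝ) (r : ℝ), 0 < r → ball x r ⊆ Ω →
      (∀ᵐ y ∂μ.restrict (ball x r), (c : EReal) < u y) → (c : EReal) ≤ u x)
    {r : ℝ} (hr : 0 < r) :
    essInf u (μ.restrict (ball x r ∩ Ω)) ≤ u x := by
  by_contra! hlt
  obtain ⟨c, hc_lt, hc_essInf⟩ := EReal.exists_between_coe_real hlt
  obtain ⟨r₀, hr₀, hr₀Ω⟩ := Metric.isOpen_iff.1 hΩ x hx
  have hsubΩ : ball x (min r₀ r) ⊆ Ω := (ball_subset_ball (min_le_left _ _)).trans hr₀Ω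
  have hsub : ball x (min r₀ r) ⊆ ball x r ∩ Ω :=
    fun y hy => ⟨ball_subset_ball (min_le_right _ _) hy, hsubΩ hy⟩
  have hae : ∀ᵐ y ∂μ.restrict (ball x (min r₀ r)), (c : EReal) < u y :=
    ae_mono (Measure.restrict_mono hsub le_rfl) (ae_lt_of_lt_essInf hc_essInf)
  exact (hc_lt.trans_le (hmin c _ (lt_min hr₀ hr) hsubΩ hae)).false

theorem stmt11_general {n : ℕ} (Ω : Set (EuclideanSpace ℝ (Fin n))) (hΩ : IsOpen Ω)
    (u : EuclideanSpace ℝ (Fin n) → EReal)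
    (hzero : ∀ a ε : ℝ, 0 < ε → ∀ (x : EuclideanSpace ℝ (Fin n)) (r : ℝ), 0 < r →
      ball x r ⊆ Ω →
      (∀ᵐ y ∂(volume.restrict (ball x r)), ((a - ε : ℝ) : EReal) < u y) →
      ∀ y ∈ ball x r, ((a - ε : ℝ) : EReal) ≤ u y)
    (hle : ∀ x ∈ Ω,
      u x ≤ liminf u (nhdsWithin x (Ω \ {x})) ∧
      liminf u (nhdsWithin x (Ω \ {x})) ≤
        ⨆ (r : ℝ) (_ : 0 < r), essInf u (volume.restrict (ball x r ∩ Ω))) :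
    ∀ x ∈ Ω,
      u x = liminf u (nhdsWithin x (Ω \ {x})) ∧
      liminf u (nhdsWithin x (Ω \ {x})) =
        ⨆ (r : ℝ) (_ : 0 < r), essInf u (volume.restrict (ball x r ∩ Ω)) := by
  intro x hx
  obtain ⟨h_le_liminf, h_liminf_le⟩ := hle x hx
  have hmin : ∀ (c : ℝ) (r : ℝ), 0 < r → ball x r ⊆ Ω →
      (∀ᵐ y ∂volume.restrict (ball x r), (c : EReal) < u y) → (c : EReal) ≤ u x := by
    intro c r hr hsub hae
    simpa using hzero (c + 1) 1 one_pos x r hr hsub (by simpa using hae) x (mem_ball_self hr)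
  have h_essLiminf_le : (⨆ (r : ℝ) (_ : 0 < r),
      essInf u (volume.restrict (ball x r ∩ Ω))) ≤ u x :=
    iSup₂_le fun _ hr => essInf_restrict_ball_inter_le hΩ hx hmin hr
  exact ⟨le_antisymm h_le_liminf (h_liminf_le.trans h_essLiminf_le),
    le_antisymm h_liminf_le (h_essLiminf_le.trans h_le_liminf)⟩

/-- Lemma 4.14: Let `u` be `A`-superharmonic and finite a.e. in `Ω`.
Given: (i) `u` lower semicontinuous on `Ω`; (ii)+(iii) combined: whenever `u > a − ε`
a.e. on a ball `B ⊆ Ω` then `u ≥ a − ε` everywhere on `B` (the function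
`min{u − a + ε, 0}` is `A`-superharmonic, vanishes a.e. in `B`, hence vanishes
identically by Lemma 4.13); and the inequalities
`u(x) ≤ liminf_{y→x} u(y) ≤ ess liminf_{y→x} u(y)`; then for every `x ∈ Ω`:
`u(x) = liminf_{y→x} u(y) = ess liminf_{y→x} u(y)`, where
`ess liminf_{y→x} u(y) = sup_{r>0} ess inf_{B(x,r)} u`. -/
theorem stmt11 {n : ℕ} (Ω : Set (EuclideanSpace ℝ (Fin n))) (hΩ : IsOpen Ω)
    (u : EuclideanSpace ℝ (Fin n) → EReal)
    (hlsc : LowerSemicontinuousOn u Ω)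
    (hfin : ∀ᵐ x, x ∈ Ω → u x ≠ ⊤)
    (hzero : ∀ a ε : ℝ, 0 < ε → ∀ (x : EuclideanSpace ℝ (Fin n)) (r : ℝ), 0 < r →
      ball x r ⊆ Ω →
      (∀ᵐ y ∂(volume.restrict (ball x r)), ((a - ε : ℝ) : EReal) < u y) →
      ∀ y ∈ ball x r, ((a - ε : ℝ) : EReal) ≤ u y)
    (hle : ∀ x ∈ Ω,
      u x ≤ liminf u (nhdsWithin x (Ω \ {x})) ∧
      liminf u (nhdsWithin x (Ω \ {x})) ≤
        ⨆ (r : ℝ) (_ : 0 < r), essInf u (volume.restrict (ball x r ∩ Ω))) :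
    ∀ x ∈ Ω,
      u x = liminf u (nhdsWithin x (Ω \ {x})) ∧
      liminf u (nhdsWithin x (Ω \ {x})) =
        ⨆ (r : ℝ) (_ : 0 < r), essInf u (volume.restrict (ball x r ∩ Ω)) :=
  stmt11_general Ω hΩ u hzero hle
end
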